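/- Volume of a 4-simplex from the Gram matrix of its volume normals: let v₀, v₁, v₂, v₃, v₄ ∈ ℝ⁴ be affinely independent, set eᵢ = vᵢ − v₀ for i = 1,…,4, and let E be the 4×4 matrix with columns e₁, e₂, e₃, e₄. For each i let mᵢ ∈ ℝ⁴ be the (unique) vector such that η(mᵢ, v) = det(E with i-th column replaced by v) for all v ∈ ℝ⁴. Let L be the 4×4 matrix L_{ij} = η(mᵢ, mⱼ). Then det L = −(det E)⁶, and the spacetime volume Ω = |det E| / 4! of the 4-simplex with vertices v₀,…,v₄ satisfies Ω = (1/4!) · |det L|^{1/6}. -/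

import Mathlib

/-- The Minkowski bilinear form on `ℝ⁴` with signature `(-,+,+,+)`. -/
def eta (x y : Fin 4 → ℝ) : ℝ :=
  -(x 0 * y 0) + x 1 * y 1 + x 2 * y 2 + x 3 * y 3

/-- The 4×4 matrix whose columns are the vectors `e 0, e 1, e 2, e 3`. -/
def cols (e : Fin 4 → Fin 4 → ℝ) : Matrix (Fin 4) (Fin 4) ℝ :=
  Matrix.of fun i j => e j i

/-!
Write the form as `η(x, y) = x ⬝ G y` with `G = diag(-1, 1, 1, 1)` and let `M` be the matrix with
rows `mᵢ`. Testing the defining identity of `mᵢ` on basis vectors turns it into Cramer's rule: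
`M G = adj E`. The Gram matrix is `L = M G Mᵀ`, so `det L · det G = det(M G)² = det(adj E)² =
(det E)⁶`, and `det G = -1`.
-/

open Matrix

namespace Matrix

variable {n R : Type*} [Fintype n] [CommRing R]

theorem of_dotProduct_mulVec_eq_mul_mul_transpose (G : Matrix n n R) (m : n → n → R) :
    of (fun i j => m i ⬝ᵥ (G *ᵥ m j)) = of m * G * (of m)ᵀ := by
  ext i j
  rw [mul_mul_apply]
  rfl

variable [DecidableEq n]

theorem of_mul_eq_adjugate_of_dotProduct_mulVec_eq_det_updateCol {G E : Matrix n n R}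
    {m : n → n → R} (hm : ∀ i w, m i ⬝ᵥ (G *ᵥ w) = (E.updateCol i w).det) :
    of m * G = E.adjugate := by
  ext i k
  have h := hm i (Pi.single k 1)
  rw [← cramer_apply, cramer_eq_adjugate_mulVec, mulVec_single_one, mulVec_single_one] at h
  simpa [mul_apply, dotProduct] using h

theorem det_mul_mul_transpose_mul_det_of_mul_eq_adjugate {M G E : Matrix n n R}
    (h : M * G = E.adjugate) :
    (M * G * Mᵀ).det * G.det = E.det ^ (2 * (Fintype.card n - 1)) := by
  calc (M * G * Mᵀ).det * G.det = (M * G).det * (M * G).det := by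
        rw [det_mul, det_transpose, det_mul M G]; ring
    _ = E.det ^ (2 * (Fintype.card n - 1)) := by rw [h, det_adjugate, ← pow_add, two_mul]

end Matrix

def minkowskiMetric : Matrix (Fin 4) (Fin 4) ℝ := diagonal ![-1, 1, 1, 1]

theorem eta_eq_dotProduct_mulVec (x y : Fin 4 → ℝ) : eta x y = x ⬝ᵥ (minkowskiMetric *ᵥ y) := by
  simp [eta, minkowskiMetric, mulVec_diagonal, dotProduct, Fin.sum_univ_four]

theorem det_minkowskiMetric : minkowskiMetric.det = -1 := by
  simp [minkowskiMetric, det_diagonal, Fin.prod_univ_four]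

theorem simplex_volume_from_normals_general
    (e : Fin 4 → Fin 4 → ℝ)
    (m : Fin 4 → Fin 4 → ℝ)
    (hm : ∀ i w, eta (m i) w = ((cols e).updateCol i w).det) :
    (Matrix.of fun i j => eta (m i) (m j)).det = -((cols e).det ^ 6) ∧
    |(cols e).det| / 24 =
      (1 / 24) * |(Matrix.of fun i j => eta (m i) (m j)).det| ^ ((1 : ℝ) / 6) := by
  simp only [eta_eq_dotProduct_mulVec] at hm ⊢
  have hdet : (of fun i j => m i ⬝ᵥ (minkowskiMetric *ᵥ m j)).det = -((cols e).det ^ 6) := by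
    have h := det_mul_mul_transpose_mul_det_of_mul_eq_adjugate
      (of_mul_eq_adjugate_of_dotProduct_mulVec_eq_det_updateCol hm)
    rw [det_minkowskiMetric, Fintype.card_fin] at h
    rw [of_dotProduct_mulVec_eq_mul_mul_transpose]
    linear_combination -h
  refine ⟨hdet, ?_⟩
  have hroot : (|(cols e).det| ^ 6) ^ ((1 : ℝ) / 6) = |(cols e).det| := by
    simpa using Real.pow_rpow_inv_natCast (abs_nonneg (cols e).det) (n := 6) (by norm_num)
  rw [hdet, abs_neg, abs_pow, hroot]
  ring

/-- Volume of a 4-simplex from the Gram matrix of its volume normals: with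
edge vectors `eᵢ = vᵢ − v₀` (columns of `E`) and volume normals `mᵢ` defined by
`η(mᵢ, w) = det(E with i-th column replaced by w)`, the Gram matrix
`L = (η(mᵢ,mⱼ))` satisfies `det L = −(det E)⁶`, so the simplex volume
`Ω = |det E|/4!` satisfies `Ω = (1/4!)·|det L|^{1/6}`. -/
theorem simplex_volume_from_normals (v : Fin 5 → Fin 4 → ℝ)
    (hv : AffineIndependent ℝ v)
    (e : Fin 4 → Fin 4 → ℝ) (he : ∀ i, e i = v i.succ - v 0)
    (m : Fin 4 → Fin 4 → ℝ)
    (hm : ∀ i w, eta (m i) w = ((cols e).updateCol i w).det) :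
    (Matrix.of fun i j => eta (m i) (m j)).det = -((cols e).det ^ 6) ∧
    |(cols e).det| / 24 =
      (1 / 24) * |(Matrix.of fun i j => eta (m i) (m j)).det| ^ ((1 : ℝ) / 6) :=
  simplex_volume_from_normals_general e m hm
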